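/- arXiv:1407.0936 — 2 statements merged into one kernel-verified Lean document; each statement's English description precedes it below -/
import Mathlib

section
/- Let ρ ∈ (0,1), k ≥ 1, and μ ∈ ℝ^k with max{μ_1, …, μ_k} > 0. Let X ~ N(μ, Σ) with Σ_{ij} = ρ + (1−ρ)δ_{ij} and X* = max{X_1, …, X_k}. Then F_{X*}(x) < Φ(x) for every x ∈ ℝ; in particular F_{X*} and Φ do not intersect. -/
/-! Since `ρ + (1 - ρ) = 1`, each coordinate `X_i = μ_i + √ρ Y_0 + √(1-ρ) Y_i` has law
`N(μ_i, 1)`. Choosing `i` with `μ_i > 0` and using `X* ≥ X_i` gives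
`F_{X*}(x) ≤ Φ(x - μ_i) < Φ(x)`. -/

open MeasureTheory ProbabilityTheory Filter
open scoped ENNReal

/-- The standard normal cumulative distribution function `Φ`. -/
noncomputable def Phi (x : ℝ) : ℝ := ((gaussianReal 0 1) (Set.Iic x)).toReal

/-- The standard normal probability density function `φ`. -/
noncomputable def phiPDF (x : ℝ) : ℝ := gaussianPDFReal 0 1 x

/-- The joint law of `n` independent standard normal random variables. -/
noncomputable def stdGaussianPi (n : ℕ) : Measure (Fin n → ℝ) :=
  Measure.pi fun _ => gaussianReal 0 1

/-- The intraclass-correlation multivariate Gaussian vector `X ~ N(μ, Σ)` with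
`Σ_{ij} = ρ + (1-ρ)δ_{ij}`, realized as `X_i = μ_i + √ρ Y_0 + √(1-ρ) Y_i` where
`Y_0, …, Y_k` are independent standard normals (the coordinates of `ω`). -/
noncomputable def Xvec (ρ : ℝ) {k : ℕ} (μ : Fin k → ℝ) (i : Fin k) (ω : Fin (k+1) → ℝ) : ℝ :=
  μ i + Real.sqrt ρ * ω 0 + Real.sqrt (1-ρ) * ω i.succ

/-- The cumulative distribution function of `X* = max {X_1, …, X_k}`. -/
noncomputable def Fstar (ρ : ℝ) {k : ℕ} (μ : Fin k → ℝ) (x : ℝ) : ℝ :=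
  (stdGaussianPi (k+1) {ω | (⨆ i, Xvec ρ μ i ω) ≤ x}).toReal

open Set
open scoped NNReal

namespace ProbabilityTheory

variable {Ω : Type*} {mΩ : MeasurableSpace Ω} {P : Measure Ω} {X Y : Ω → ℝ}

lemma IndepFun.hasLaw_const_mul_add_const_mul_gaussianReal {m₁ m₂ : ℝ} {v₁ v₂ : ℝ≥0}
    (hXY : IndepFun X Y P) (hX : HasLaw X (gaussianReal m₁ v₁) P)
    (hY : HasLaw Y (gaussianReal m₂ v₂) P) (a b : ℝ) :
    HasLaw (fun ω ↦ a * X ω + b * Y ω)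
      (gaussianReal (a * m₁ + b * m₂)
        (⟨a ^ 2, sq_nonneg a⟩ * v₁ + ⟨b ^ 2, sq_nonneg b⟩ * v₂)) P := by
  have haX := gaussianReal_const_mul hX a
  have hbY := gaussianReal_const_mul hY b
  refine ⟨haX.aemeasurable.add hbY.aemeasurable, ?_⟩
  exact gaussianReal_add_gaussianReal_of_indepFun
    (hXY.comp (measurable_const_mul a) (measurable_const_mul b)) haX.map_eq hbY.map_eq

lemma IndepFun.hasLaw_sqrt_mul_add_sqrt_one_sub_mul_stdGaussian (hXY : IndepFun X Y P)
    (hX : HasLaw X (gaussianReal 0 1) P) (hY : HasLaw Y (gaussianReal 0 1) P)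
    {ρ : ℝ} (hρ : ρ ∈ Icc (0 : ℝ) 1) :
    HasLaw (fun ω ↦ √ρ * X ω + √(1 - ρ) * Y ω) (gaussianReal 0 1) P := by
  convert hXY.hasLaw_const_mul_add_const_mul_gaussianReal hX hY √ρ √(1 - ρ) using 2
  · simp
  · ext
    change (1 : ℝ) = √ρ ^ 2 * 1 + √(1 - ρ) ^ 2 * 1
    rw [Real.sq_sqrt hρ.1, Real.sq_sqrt (sub_nonneg.2 hρ.2)]
    ring

end ProbabilityTheory

lemma hasLaw_eval_stdGaussianPi {n : ℕ} (i : Fin n) :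
    HasLaw (fun ω ↦ ω i) (gaussianReal 0 1) (stdGaussianPi n) :=
  (measurePreserving_eval (fun _ : Fin n ↦ gaussianReal 0 1) i).hasLaw

lemma indepFun_eval_stdGaussianPi {n : ℕ} {i j : Fin n} (hij : i ≠ j) :
    IndepFun (fun ω ↦ ω i) (fun ω ↦ ω j) (stdGaussianPi n) :=
  (iIndepFun_pi fun _ ↦ aemeasurable_id).indepFun hij

lemma Phi_strictMono : StrictMono Phi := by
  intro u v huv
  have hpos : gaussianReal 0 1 (Ioc u v) ≠ 0 := fun h ↦
    huv.not_ge (by simpa using gaussianReal_absolutelyContinuous' 0 one_ne_zero h)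
  have hlt : gaussianReal 0 1 (Iic u) < gaussianReal 0 1 (Iic v) := by
    rw [← Iic_union_Ioc_eq_Iic huv.le, measure_union (Iic_disjoint_Ioc le_rfl) measurableSet_Ioc]
    exact ENNReal.lt_add_right (measure_ne_top _ _) hpos
  exact ENNReal.toReal_strict_mono (measure_ne_top _ _) hlt

lemma measure_Xvec_le {ρ : ℝ} (hρ : ρ ∈ Icc (0 : ℝ) 1) {k : ℕ} (μ : Fin k → ℝ) (i : Fin k)
    (x : ℝ) :
    stdGaussianPi (k + 1) {ω | Xvec ρ μ i ω ≤ x} = gaussianReal 0 1 (Iic (x - μ i)) := by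
  have hZ := (indepFun_eval_stdGaussianPi (Fin.succ_ne_zero i).symm
    ).hasLaw_sqrt_mul_add_sqrt_one_sub_mul_stdGaussian
      (hasLaw_eval_stdGaussianPi _) (hasLaw_eval_stdGaussianPi _) hρ
  have hset : {ω | Xvec ρ μ i ω ≤ x} = {ω | √ρ * ω 0 + √(1 - ρ) * ω i.succ ≤ x - μ i} := by
    ext ω
    simp only [Xvec, mem_ofPred_eq]
    constructor <;> intro h <;> linarith
  rw [hset]
  exact hZ.measure_eq (p := (· ≤ x - μ i)) measurableSet_Iic

lemma Fstar_le_Phi_sub {ρ : ℝ} (hρ : ρ ∈ Icc (0 : ℝ) 1) {k : ℕ} (μ : Fin k → ℝ) (i : Fin k)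
    (x : ℝ) : Fstar ρ μ x ≤ Phi (x - μ i) := by
  refine ENNReal.toReal_mono (measure_ne_top _ _) ?_
  rw [← measure_Xvec_le hρ μ i x]
  exact measure_mono fun ω (hω : (⨆ j, Xvec ρ μ j ω) ≤ x) ↦
    (le_ciSup (finite_range _).bddAbove i).trans hω

theorem stmt5_general (k : ℕ) (ρ : ℝ) (hρ : ρ ∈ Set.Ioo (0:ℝ) 1)
    (μ : Fin k → ℝ) (hμ : 0 < ⨆ i, μ i) :
    (∀ x : ℝ, Fstar ρ μ x < Phi x) ∧ ¬ ∃ x : ℝ, Fstar ρ μ x = Phi x := by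
  -- a supremum over an empty index type is `0` in `ℝ`
  have : Nonempty (Fin k) := by
    by_contra h
    rw [not_nonempty_iff] at h
    simp at hμ
  obtain ⟨i, hi⟩ := exists_lt_of_lt_ciSup hμ
  have hlt (x : ℝ) : Fstar ρ μ x < Phi x :=
    (Fstar_le_Phi_sub (Ioo_subset_Icc_self hρ) μ i x).trans_lt (Phi_strictMono (by linarith))
  exact ⟨hlt, fun ⟨x, hx⟩ ↦ (hlt x).ne hx⟩

/-- If `max {μ_1, …, μ_k} > 0` then `F_{X*}(x) < Φ(x)` for every `x`; in particular
`F_{X*}` and `Φ` do not intersect. -/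
theorem stmt5 (k : ℕ) (hk : 1 ≤ k) (ρ : ℝ) (hρ : ρ ∈ Set.Ioo (0:ℝ) 1)
    (μ : Fin k → ℝ) (hμ : 0 < ⨆ i, μ i) :
    (∀ x : ℝ, Fstar ρ μ x < Phi x) ∧ ¬ ∃ x : ℝ, Fstar ρ μ x = Phi x :=
  stmt5_general k ρ hρ μ hμ
end

section
/- Let ρ ∈ (0,1), k ≥ 1, ν_0 ∈ ℝ and ν ∈ ℝ^k, and let G(ν_0, ν) = (1/√ρ) ∫_{−∞}^{∞} φ((t − ν_0)/√ρ) ∏_{j=1}^{k} Φ((t − ν_j)/√(1−ρ)) dt. Then the partial derivative of G with respect to ν_0 exists, is strictly positive, and equals ∂G/∂ν_0(ν_0, ν) = (1/√ρ) ∫_{−∞}^{∞} φ((t − ν_0)/√ρ) · d/dt(∏_{j=1}^{k} Φ((t − ν_j)/√(1−ρ))) dt. -/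
open MeasureTheory ProbabilityTheory Filter
open scoped ENNReal

/-- `G(ν₀, ν) = (1/√ρ) ∫ φ((t-ν₀)/√ρ) ∏_j Φ((t-ν_j)/√(1-ρ)) dt`. -/
noncomputable def Gint (ρ : ℝ) {k : ℕ} (ν0 : ℝ) (ν : Fin k → ℝ) : ℝ :=
  (1 / Real.sqrt ρ) *
    ∫ t : ℝ, phiPDF ((t - ν0) / Real.sqrt ρ) * ∏ j, Phi ((t - ν j) / Real.sqrt (1-ρ))

/-!
After the substitution `t = ν₀ + √ρ u`, `G(ν₀, ν) = ∫ φ(u) P(ν₀ + √ρ u) du` with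
`P(s) = ∏ⱼ Φ((s - νⱼ)/√(1-ρ))`. Since `0 ≤ P ≤ 1` and `0 ≤ P' ≤ k/√(1-ρ)`, the `ν₀`-derivative of
the integrand is dominated by a multiple of `φ`, so it may be taken under the integral sign, and a
final change of variables back gives the stated formula. By the product rule `P'` is a sum of
everywhere positive terms once `k ≥ 1`, hence the derivative is positive.
-/

open Finset

lemma hasDerivAt_integral_Iic {f : ℝ → ℝ} (hfi : Integrable f) (hfc : Continuous f) (x : ℝ) :
    HasDerivAt (fun y => ∫ t in Set.Iic y, f t) (f x) x := by
  have hsplit : (fun y => ∫ t in Set.Iic y, f t) =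
      fun y => (∫ t in Set.Iic 0, f t) + ∫ t in (0 : ℝ)..y, f t := by
    funext y
    rw [← intervalIntegral.integral_Iic_sub_Iic hfi.integrableOn hfi.integrableOn]
    ring
  rw [hsplit]
  exact (intervalIntegral.integral_hasDerivAt_right hfi.intervalIntegrable
    hfc.aestronglyMeasurable.stronglyMeasurableAtFilter hfc.continuousAt).const_add _

lemma one_div_mul_integral_comp_sub_div {r : ℝ} (hr : 0 < r) (f g : ℝ → ℝ) (v : ℝ) :
    1 / r * ∫ t, f ((t - v) / r) * g t = ∫ u, f u * g (v + r * u) := by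
  set F : ℝ → ℝ := fun t => f ((t - v) / r) * g t
  have hF : (fun u => f u * g (v + r * u)) = fun u => F (r * u + v) := by
    funext u
    simp only [F, add_comm (r * u) v, add_sub_cancel_left, mul_div_cancel_left₀ _ hr.ne']
  rw [hF, Measure.integral_comp_mul_left (fun t => F (t + v)), integral_add_right_eq_self,
    smul_eq_mul, abs_of_pos (inv_pos.2 hr), one_div]

lemma hasDerivAt_integral_mul_comp_add {α : Type*} [MeasurableSpace α] {μ : Measure α}
    {g h : α → ℝ} {P : ℝ → ℝ} {B M : ℝ} (hg : Integrable g μ) (hh : AEMeasurable h μ)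
    (hP : Differentiable ℝ P) (hPB : ∀ x, ‖P x‖ ≤ B) (hP'M : ∀ x, ‖deriv P x‖ ≤ M) (v₀ : ℝ) :
    Integrable (fun a => g a * deriv P (v₀ + h a)) μ ∧
      HasDerivAt (fun v => ∫ a, g a * P (v + h a) ∂μ) (∫ a, g a * deriv P (v₀ + h a) ∂μ) v₀ := by
  have hPh_meas : ∀ v, AEStronglyMeasurable (fun a => P (v + h a)) μ := fun v =>
    (hP.continuous.measurable.comp_aemeasurable (hh.const_add v)).aestronglyMeasurable
  refine hasDerivAt_integral_of_dominated_loc_of_deriv_le (F := fun v a => g a * P (v + h a))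
    (F' := fun v a => g a * deriv P (v + h a)) (bound := fun a => ‖g a‖ * M)
    (s := Set.univ) univ_mem
    (Eventually.of_forall fun v => hg.aestronglyMeasurable.mul (hPh_meas v))
    (hg.mul_bdd (hPh_meas v₀) (ae_of_all _ fun a => hPB _))
    (hg.aestronglyMeasurable.mul
      ((measurable_deriv P).comp_aemeasurable (hh.const_add v₀)).aestronglyMeasurable)
    (ae_of_all _ fun a v _ => ?_) (hg.norm.mul_const M) (ae_of_all _ fun a v _ => ?_)
  · rw [norm_mul]
    exact mul_le_mul_of_nonneg_left (hP'M _) (norm_nonneg _)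
  · exact ((hP (v + h a)).hasDerivAt.comp_add_const v (h a)).const_mul (g a)

lemma integral_pos_of_forall_pos {α : Type*} [MeasurableSpace α] {μ : Measure α} [NeZero μ]
    {f : α → ℝ} (hfi : Integrable f μ) (hf : ∀ a, 0 < f a) : 0 < ∫ a, f a ∂μ := by
  rw [integral_pos_iff_support_of_nonneg (fun a => (hf a).le) hfi,
    Function.support_eq_univ fun a => (hf a).ne']
  exact Measure.measure_univ_pos.2 (NeZero.ne μ)

lemma continuous_phiPDF : Continuous phiPDF := by
  unfold phiPDF
  rw [gaussianPDFReal_def]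
  fun_prop

lemma integrable_phiPDF : Integrable phiPDF := integrable_gaussianPDFReal 0 1

lemma phiPDF_pos (x : ℝ) : 0 < phiPDF x := gaussianPDFReal_pos 0 1 x one_ne_zero

lemma phiPDF_le_one (x : ℝ) : phiPDF x ≤ 1 := by
  have hexp : Real.exp (-(x - 0) ^ 2 / (2 * 1)) ≤ 1 := by
    rw [Real.exp_le_one_iff]
    nlinarith [sq_nonneg x]
  have hsqrt : (Real.sqrt (2 * Real.pi * 1))⁻¹ ≤ 1 :=
    inv_le_one_of_one_le₀ (Real.one_le_sqrt.2 (by nlinarith [Real.pi_gt_three]))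
  simpa [phiPDF, gaussianPDFReal_def] using mul_le_one₀ hsqrt (Real.exp_nonneg _) hexp

lemma Phi_eq_integral (x : ℝ) : Phi x = ∫ t in Set.Iic x, phiPDF t := by
  rw [Phi, gaussianReal_apply_eq_integral 0 one_ne_zero,
    ENNReal.toReal_ofReal (integral_nonneg (fun t => gaussianPDFReal_nonneg 0 1 t))]
  rfl

lemma hasDerivAt_Phi (x : ℝ) : HasDerivAt Phi (phiPDF x) x := by
  simpa only [← Phi_eq_integral] using hasDerivAt_integral_Iic integrable_phiPDF continuous_phiPDF x

lemma Phi_pos (x : ℝ) : 0 < Phi x := by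
  refine ENNReal.toReal_pos (fun h => ?_) (measure_ne_top _ _)
  simpa [Real.volume_Iic] using gaussianReal_absolutelyContinuous' 0 one_ne_zero h

lemma Phi_nonneg (x : ℝ) : 0 ≤ Phi x := ENNReal.toReal_nonneg

lemma Phi_le_one (x : ℝ) : Phi x ≤ 1 :=
  ENNReal.toReal_le_of_le_ofReal zero_le_one (by simpa using prob_le_one)

section PhiProd

variable {ι : Type*} [Fintype ι] (c : ℝ) (ν : ι → ℝ)

noncomputable def PhiProd (s : ℝ) : ℝ := ∏ j, Phi ((s - ν j) / c)

lemma norm_PhiProd_le_one (s : ℝ) : ‖PhiProd c ν s‖ ≤ 1 := by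
  rw [PhiProd, Real.norm_of_nonneg (prod_nonneg fun _ _ => Phi_nonneg _)]
  exact prod_le_one (fun _ _ => Phi_nonneg _) fun _ _ => Phi_le_one _

lemma hasDerivAt_PhiProd [DecidableEq ι] (s : ℝ) :
    HasDerivAt (PhiProd c ν)
      (∑ j, (∏ i ∈ univ.erase j, Phi ((s - ν i) / c)) * (phiPDF ((s - ν j) / c) / c)) s := by
  have hfactor : ∀ j ∈ univ,
      HasDerivAt (fun s => Phi ((s - ν j) / c)) (phiPDF ((s - ν j) / c) / c) s := fun j _ =>
    ((hasDerivAt_Phi _).comp s (((hasDerivAt_id' s).sub_const (ν j)).div_const c)).congr_deriv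
      (mul_one_div _ _)
  show HasDerivAt (fun s => ∏ j, Phi ((s - ν j) / c)) _ s
  simpa only [smul_eq_mul] using HasDerivAt.fun_finsetProd hfactor

lemma differentiable_PhiProd : Differentiable ℝ (PhiProd c ν) := by
  classical
  exact fun s => (hasDerivAt_PhiProd c ν s).differentiableAt

lemma deriv_PhiProd_pos [Nonempty ι] (hc : 0 < c) (s : ℝ) : 0 < deriv (PhiProd c ν) s := by
  classical
  rw [(hasDerivAt_PhiProd c ν s).deriv]
  exact sum_pos (fun j _ => mul_pos (prod_pos fun i _ => Phi_pos _)
    (div_pos (phiPDF_pos _) hc)) univ_nonempty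

lemma deriv_PhiProd_le (hc : 0 < c) (s : ℝ) : deriv (PhiProd c ν) s ≤ Fintype.card ι / c := by
  classical
  rw [(hasDerivAt_PhiProd c ν s).deriv]
  calc _ ≤ ∑ _j : ι, 1 * (1 / c) := sum_le_sum fun _ _ =>
        mul_le_mul (prod_le_one (fun i _ => Phi_nonneg _) fun i _ => Phi_le_one _)
          (div_le_div_of_nonneg_right (phiPDF_le_one _) hc.le)
          (div_nonneg (phiPDF_pos _).le hc.le) zero_le_one
    _ = Fintype.card ι / c := by simp [div_eq_mul_inv]

end PhiProd

/-- The partial derivative of `G` in `ν₀` exists, is strictly positive, and equals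
`(1/√ρ) ∫ φ((t-ν₀)/√ρ) · d/dt (∏_j Φ((t-ν_j)/√(1-ρ))) dt`. -/
theorem stmt12 (k : ℕ) (hk : 1 ≤ k) (ρ : ℝ) (hρ : ρ ∈ Set.Ioo (0:ℝ) 1)
    (ν0 : ℝ) (ν : Fin k → ℝ) :
    HasDerivAt (fun v => Gint ρ v ν)
      ((1 / Real.sqrt ρ) *
        ∫ t : ℝ, phiPDF ((t - ν0) / Real.sqrt ρ) *
          deriv (fun s => ∏ j, Phi ((s - ν j) / Real.sqrt (1-ρ))) t) ν0 ∧
    0 < (1 / Real.sqrt ρ) *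
        ∫ t : ℝ, phiPDF ((t - ν0) / Real.sqrt ρ) *
          deriv (fun s => ∏ j, Phi ((s - ν j) / Real.sqrt (1-ρ))) t := by
  obtain ⟨hρ0, hρ1⟩ := hρ
  have : Nonempty (Fin k) := ⟨⟨0, hk⟩⟩
  have hr : 0 < Real.sqrt ρ := Real.sqrt_pos.2 hρ0
  have hc : 0 < Real.sqrt (1 - ρ) := Real.sqrt_pos.2 (by linarith)
  set P := PhiProd (Real.sqrt (1 - ρ)) ν
  have hG : (fun v => Gint ρ v ν) = fun v => ∫ u, phiPDF u * P (v + Real.sqrt ρ * u) :=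
    funext fun v => one_div_mul_integral_comp_sub_div hr _ P v
  obtain ⟨hint, hderiv⟩ := hasDerivAt_integral_mul_comp_add integrable_phiPDF
    (measurable_const_mul (Real.sqrt ρ)).aemeasurable (differentiable_PhiProd _ ν)
    (norm_PhiProd_le_one _ ν) (fun s => by
      rw [Real.norm_of_nonneg (deriv_PhiProd_pos _ ν hc s).le]
      exact deriv_PhiProd_le _ ν hc s) ν0
  rw [show (fun s => ∏ j, Phi ((s - ν j) / Real.sqrt (1 - ρ))) = P from rfl,
    one_div_mul_integral_comp_sub_div hr, hG]
  exact ⟨hderiv, integral_pos_of_forall_pos hint fun u =>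
    mul_pos (phiPDF_pos u) (deriv_PhiProd_pos _ ν hc _)⟩
end
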